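/- Let k be a field of characteristic zero and let R = k[x_{ij} : 0 ≤ i < j ≤ 4] be the polynomial ring in 10 variables. For each m ∈ {0,1,2,3,4}, let a < b < c < d be the elements of {0,1,2,3,4} \ {m} and set q_m = x_{ab} x_{cd} − x_{ac} x_{bd} + x_{ad} x_{bc}. Then the ideal I = (q_0, …, q_4) of R is a prime ideal; equivalently, the quotient ring S = R/I is an integral domain. -/

import Mathlib

open MvPolynomial

/-- Index type for the 10 variables `x_{ij}`, `0 ≤ i < j ≤ 4`. -/
abbrev PlueckerIdx : Type := {p : Fin 5 × Fin 5 // p.1 < p.2}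

variable (k : Type*) [Field k] [CharZero k]

/-- The variable `x_{ij}` for `i < j`. -/
noncomputable def xv (i j : Fin 5) (h : i < j) : MvPolynomial PlueckerIdx k :=
  MvPolynomial.X ⟨(i, j), h⟩

/-- The Pfaffian quadric `q_m` obtained by omitting the index `m`:
`q_m = x_{ab} x_{cd} − x_{ac} x_{bd} + x_{ad} x_{bc}` where
`a < b < c < d` are the elements of `{0,1,2,3,4} \ {m}`. -/
noncomputable def pfaffian : Fin 5 → MvPolynomial PlueckerIdx k
  | 0 => xv k 1 2 (by decide) * xv k 3 4 (by decide)
       - xv k 1 3 (by decide) * xv k 2 4 (by decide)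
       + xv k 1 4 (by decide) * xv k 2 3 (by decide)
  | 1 => xv k 0 2 (by decide) * xv k 3 4 (by decide)
       - xv k 0 3 (by decide) * xv k 2 4 (by decide)
       + xv k 0 4 (by decide) * xv k 2 3 (by decide)
  | 2 => xv k 0 1 (by decide) * xv k 3 4 (by decide)
       - xv k 0 3 (by decide) * xv k 1 4 (by decide)
       + xv k 0 4 (by decide) * xv k 1 3 (by decide)
  | 3 => xv k 0 1 (by decide) * xv k 2 4 (by decide)
       - xv k 0 2 (by decide) * xv k 1 4 (by decide)
       + xv k 0 4 (by decide) * xv k 1 2 (by decide)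
  | 4 => xv k 0 1 (by decide) * xv k 2 3 (by decide)
       - xv k 0 2 (by decide) * xv k 1 3 (by decide)
       + xv k 0 3 (by decide) * xv k 1 2 (by decide)

/-- The ideal `I = (q_0, …, q_4)`. -/
noncomputable def plueckerIdeal : Ideal (MvPolynomial PlueckerIdx k) :=
  Ideal.span (Set.range (pfaffian k))

/-- The `k`-dimension of the degree-`n` homogeneous component of `S = R/I`,
i.e. of the image in `S` of the homogeneous polynomials of degree `n`. -/
noncomputable def plueckerDim (n : ℕ) : ℕ :=
  Module.finrank k
    ((MvPolynomial.homogeneousSubmodule PlueckerIdx k n).map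
      (Ideal.Quotient.mkₐ k (plueckerIdeal k)).toLinearMap)


/-!
The ideal is the kernel of the Plücker map `x_{ij} ↦ u_{0i} u_{1j} - u_{0j} u_{1i}` into the
polynomial ring on the entries of a generic `2 × 5` matrix, hence prime. The quadrics lie in the
kernel. Conversely, the relation `x_{ad} x_{bc} = q_m - x_{ab} x_{cd} + x_{ac} x_{bd}`
(`a < b < c < d`) strictly lowers `∑ (j - i)²`, so modulo `I` every polynomial is a combination of
standard monomials, those whose variables form a chain for the product order on pairs `(i, j)`.
Their images are linearly independent: in the lexicographic order the leading monomial of the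
image records the multisets of first and second indices, and a chain is determined by these.
-/

theorem MonomialOrder.linearIndependent_of_injective_degree {σ R ι : Type*} [CommRing R]
    [NoZeroDivisors R] (m : MonomialOrder σ) {f : ι → MvPolynomial σ R} (hf : ∀ i, f i ≠ 0)
    (hdeg : Function.Injective fun i => m.degree (f i)) : LinearIndependent R f := by
  classical
  rw [linearIndependent_iff]
  intro l hl
  by_contra hl0
  obtain ⟨i₀, hi₀, hmax⟩ := l.support.exists_max_image (fun i => m.toSyn (m.degree (f i)))
    (Finsupp.support_nonempty_iff.mpr hl0)
  have hlt : ∀ i ∈ l.support, i ≠ i₀ →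
      m.toSyn (m.degree (f i)) < m.toSyn (m.degree (f i₀)) := fun i hi hne =>
    lt_of_le_of_ne (hmax i hi) fun h => hne (hdeg (m.toSyn.injective h))
  have hcoeff : l i₀ * m.leadingCoeff (f i₀) = 0 := by
    have h := congrArg (coeff (m.degree (f i₀))) hl
    rwa [Finsupp.linearCombination_apply, Finsupp.sum, coeff_sum, coeff_zero,
      Finset.sum_eq_single i₀ (fun i hi hne => by
        rw [coeff_smul, m.coeff_eq_zero_of_lt (hlt i hi hne), smul_zero]) (absurd hi₀),
      coeff_smul] at h
  exact mul_ne_zero (Finsupp.mem_support_iff.mp hi₀) (m.leadingCoeff_ne_zero_iff.mpr (hf i₀)) hcoeff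

theorem MonomialOrder.degree_X_mul_X {σ R : Type*} [CommSemiring R] [NoZeroDivisors R]
    [Nontrivial R] (m : MonomialOrder σ) (a b : σ) :
    m.degree (X a * X b : MvPolynomial σ R) = Finsupp.single a 1 + Finsupp.single b 1 := by
  rw [m.degree_mul (X_ne_zero a) (X_ne_zero b), m.degree_X, m.degree_X]

theorem toLex_single_add_single_lt_swap {α β : Type*} [LinearOrder α] [LinearOrder β]
    {r₀ r₁ : α} (hr : r₀ < r₁) {i j : β} (h : i < j) :
    toLex (Finsupp.single (toLex (r₀, j)) 1 + Finsupp.single (toLex (r₁, i)) 1) <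
      toLex (Finsupp.single (toLex (r₀, i)) 1 + Finsupp.single (toLex (r₁, j)) 1) := by
  refine ⟨toLex (r₀, i), fun v hv => ?_, by simp [h.ne', hr.ne']⟩
  induction v using Lex.rec with | h v => ?_
  obtain ⟨r, a⟩ := v
  obtain hr₀ | ⟨rfl, ha⟩ := Prod.Lex.toLex_lt_toLex.mp hv
  · simp [hr₀.ne, (hr₀.trans hr).ne]
  · simp [ha.ne', (ha.trans h).ne', hr.ne]

theorem Nat.sq_sub_add_sq_sub_lt {a b c d : ℕ} (hab : a < b) (hbc : b < c) (hcd : c < d) :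
    (b - a) ^ 2 + (d - c) ^ 2 < (d - a) ^ 2 + (c - b) ^ 2 ∧
      (c - a) ^ 2 + (d - b) ^ 2 < (d - a) ^ 2 + (c - b) ^ 2 := by
  zify [hab.le, hbc.le, hcd.le, (hab.trans hbc).le, (hbc.trans hcd).le,
    (hab.trans (hbc.trans hcd)).le]
  constructor <;> nlinarith

namespace Multiset

theorem exists_forall_le_of_isChain {α : Type*} [PartialOrder α] {s : Multiset α}
    (hs : IsChain (· ≤ ·) {p | p ∈ s}) (hne : s ≠ 0) : ∃ p ∈ s, ∀ q ∈ s, p ≤ q := by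
  classical
  obtain ⟨p, hp⟩ := s.toFinset.exists_minimal (toFinset_nonempty.mpr hne)
  have hps : p ∈ s := mem_toFinset.mp hp.prop
  refine ⟨p, hps, fun q hq => ?_⟩
  rcases hs.total hps hq with h | h
  · exact h
  · exact hp.le_of_le (mem_toFinset.mpr hq) h

/-- The least elements of the two chains have the same coordinates, so they agree; remove them
and recurse. -/
theorem eq_of_isChain_of_map_fst_eq_of_map_snd_eq {α β : Type*} [PartialOrder α]
    [PartialOrder β] {s t : Multiset (α × β)} (hs : IsChain (· ≤ ·) {p | p ∈ s})
    (ht : IsChain (· ≤ ·) {p | p ∈ t}) (h₁ : s.map Prod.fst = t.map Prod.fst)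
    (h₂ : s.map Prod.snd = t.map Prod.snd) : s = t := by
  classical
  induction hn : card s generalizing s t with
  | zero =>
    rw [card_eq_zero.mp hn, map_zero, eq_comm, map_eq_zero] at h₁
    rw [card_eq_zero.mp hn, h₁]
  | succ n ih =>
    have hs0 : s ≠ 0 := fun h => by simp [h] at hn
    have ht0 : t ≠ 0 := fun h => by rw [h, map_zero, map_eq_zero] at h₁; exact hs0 h₁
    obtain ⟨p, hp, hpmin⟩ := exists_forall_le_of_isChain hs hs0
    obtain ⟨q, hq, hqmin⟩ := exists_forall_le_of_isChain ht ht0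
    have hpq : p = q := by
      have le_of_map {u v : Multiset (α × β)} {a b : α × β}
          (hmin : ∀ c ∈ u, a ≤ c) (hb : b ∈ v) (e₁ : v.map Prod.fst = u.map Prod.fst)
          (e₂ : v.map Prod.snd = u.map Prod.snd) : a ≤ b := by
        obtain ⟨c, hc, hc₁⟩ := mem_map.mp (e₁ ▸ mem_map_of_mem Prod.fst hb)
        obtain ⟨d, hd, hd₂⟩ := mem_map.mp (e₂ ▸ mem_map_of_mem Prod.snd hb)
        exact ⟨hc₁ ▸ (hmin c hc).1, hd₂ ▸ (hmin d hd).2⟩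
      exact le_antisymm (le_of_map hpmin hq h₁.symm h₂.symm) (le_of_map hqmin hp h₁ h₂)
    subst hpq
    rw [← cons_erase hp, ← cons_erase hq, map_cons, map_cons, cons_inj_right] at h₁ h₂
    rw [← cons_erase hp, ← cons_erase hq,
      ih (hs.mono fun _ => mem_of_mem_erase) (ht.mono fun _ => mem_of_mem_erase) h₁ h₂
        (by rw [card_erase_of_mem hp, hn]; rfl)]

end Multiset

section PlueckerMap

variable (R : Type*) [CommRing R]

/-- The variable `toLex (r, i)` is the entry `u_{ri}` of a generic `2 × 5` matrix; the
lexicographic order makes the diagonal term the leading term of the minor for `i < j`. -/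
noncomputable def plueckerMinor (i j : Fin 5) : MvPolynomial (Fin 2 ×ₗ Fin 5) R :=
  X (toLex (0, i)) * X (toLex (1, j)) - X (toLex (0, j)) * X (toLex (1, i))

noncomputable def plueckerMap :
    MvPolynomial PlueckerIdx R →ₐ[R] MvPolynomial (Fin 2 ×ₗ Fin 5) R :=
  aeval fun p => plueckerMinor R p.1.1 p.1.2

variable {R}

theorem plueckerMap_X (p : PlueckerIdx) : plueckerMap R (X p) = plueckerMinor R p.1.1 p.1.2 :=
  aeval_X _ _

variable [IsDomain R]

theorem degree_plueckerMinor {i j : Fin 5} (h : i < j) :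
    MonomialOrder.lex.degree (plueckerMinor R i j) =
      Finsupp.single (toLex (0, i)) 1 + Finsupp.single (toLex (1, j)) 1 := by
  rw [plueckerMinor, MonomialOrder.degree_sub_of_lt, MonomialOrder.degree_X_mul_X]
  rw [MonomialOrder.degree_X_mul_X, MonomialOrder.degree_X_mul_X]
  exact toLex_single_add_single_lt_swap Fin.zero_lt_one h

theorem plueckerMinor_ne_zero {i j : Fin 5} (h : i < j) : plueckerMinor R i j ≠ 0 :=
  MonomialOrder.ne_zero_of_degree_ne_zero (m := MonomialOrder.lex)
    (by simp [degree_plueckerMinor h])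

theorem plueckerMap_prod_ne_zero (s : Multiset PlueckerIdx) :
    plueckerMap R (s.map X).prod ≠ 0 := by
  rw [map_multiset_prod, Multiset.map_map]
  exact Multiset.prod_ne_zero fun h => by
    obtain ⟨p, -, hp⟩ := Multiset.mem_map.mp h
    exact plueckerMinor_ne_zero p.2 ((plueckerMap_X p).symm.trans hp)

theorem degree_plueckerMap_prod (s : Multiset PlueckerIdx) :
    MonomialOrder.lex.degree (plueckerMap R (s.map X).prod) =
      Multiset.toFinsupp ((s.map fun p => toLex (0, p.1.1)) + s.map fun p => toLex (1, p.1.2)) := by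
  induction s using Multiset.induction_on with
  | empty => simp
  | cons p s ih =>
    rw [Multiset.map_cons, Multiset.prod_cons, map_mul,
      MonomialOrder.degree_mul (by rw [plueckerMap_X]; exact plueckerMinor_ne_zero p.2)
        (plueckerMap_prod_ne_zero s),
      ih, plueckerMap_X, degree_plueckerMinor p.2]
    simp only [← Multiset.singleton_add, Multiset.map_add, Multiset.map_singleton, map_add,
      Multiset.toFinsupp_singleton]
    abel

end PlueckerMap

def IsStandard (s : Multiset PlueckerIdx) : Prop :=
  IsChain (· ≤ ·) {p | p ∈ s}

theorem IsStandard.isChain_map_val {s : Multiset PlueckerIdx} (hs : IsStandard s) :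
    IsChain (· ≤ ·) {x | x ∈ s.map Subtype.val} := by
  convert hs.image (OrderEmbedding.subtype _) using 1
  ext
  simp

theorem IsStandard.eq_of_degree_eq {R : Type*} [CommRing R] [IsDomain R]
    {s t : Multiset PlueckerIdx} (hs : IsStandard s) (ht : IsStandard t)
    (h : MonomialOrder.lex.degree (plueckerMap R (s.map X).prod) =
      MonomialOrder.lex.degree (plueckerMap R (t.map X).prod)) : s = t := by
  rw [degree_plueckerMap_prod, degree_plueckerMap_prod] at h
  refine Multiset.map_injective Subtype.val_injective
    (Multiset.eq_of_isChain_of_map_fst_eq_of_map_snd_eq hs.isChain_map_val ht.isChain_map_val ?_ ?_)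
  · ext i
    simpa [Multiset.count_map, Multiset.map_map] using DFunLike.congr_fun h (toLex (0, i))
  · ext j
    simpa [Multiset.count_map, Multiset.map_map] using DFunLike.congr_fun h (toLex (1, j))

theorem exists_eq_cons_cons_of_not_isStandard {s : Multiset PlueckerIdx} (hs : ¬IsStandard s) :
    ∃ p q t, s = p ::ₘ q ::ₘ t ∧ p.1.1 < q.1.1 ∧ q.1.2 < p.1.2 := by
  simp only [IsStandard, IsChain, Set.Pairwise, not_forall] at hs
  obtain ⟨p, hp, q, hq, hne, hpq⟩ := hs
  change ¬((p.1.1 ≤ q.1.1 ∧ p.1.2 ≤ q.1.2) ∨ (q.1.1 ≤ p.1.1 ∧ q.1.2 ≤ p.1.2)) at hpq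
  have hs : s = p ::ₘ q ::ₘ (s.erase p).erase q := by
    rw [Multiset.cons_erase ((Multiset.mem_erase_of_ne (Ne.symm hne)).mpr hq),
      Multiset.cons_erase hp]
  by_cases h : p.1.1 < q.1.1
  · exact ⟨p, q, _, hs, h, by omega⟩
  · exact ⟨q, p, _, hs.trans (Multiset.cons_swap _ _ _), by omega, by omega⟩

section PlueckerIdeal

variable {K : Type*} [Field K]

theorem exists_pfaffian_eq {a b c d : Fin 5} (hab : a < b) (hbc : b < c) (hcd : c < d) :
    ∃ m, pfaffian K m = xv K a b hab * xv K c d hcd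
      - xv K a c (hab.trans hbc) * xv K b d (hbc.trans hcd)
      + xv K a d (hab.trans (hbc.trans hcd)) * xv K b c hbc := by
  obtain ⟨rfl, rfl, rfl, rfl⟩ | ⟨rfl, rfl, rfl, rfl⟩ | ⟨rfl, rfl, rfl, rfl⟩ |
      ⟨rfl, rfl, rfl, rfl⟩ | ⟨rfl, rfl, rfl, rfl⟩ :
      (a = 0 ∧ b = 1 ∧ c = 2 ∧ d = 3) ∨ (a = 0 ∧ b = 1 ∧ c = 2 ∧ d = 4) ∨
      (a = 0 ∧ b = 1 ∧ c = 3 ∧ d = 4) ∨ (a = 0 ∧ b = 2 ∧ c = 3 ∧ d = 4) ∨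
      (a = 1 ∧ b = 2 ∧ c = 3 ∧ d = 4) := by omega
  exacts [⟨4, rfl⟩, ⟨3, rfl⟩, ⟨2, rfl⟩, ⟨1, rfl⟩, ⟨0, rfl⟩]

theorem plueckerMap_pfaffian (m : Fin 5) : plueckerMap K (pfaffian K m) = 0 := by
  fin_cases m <;>
    simp only [pfaffian, xv, map_add, map_sub, map_mul, plueckerMap_X, plueckerMinor] <;> ring

def spread (p : PlueckerIdx) : ℕ := (p.1.2.val - p.1.1.val) ^ 2

variable (K) in
noncomputable def standardSpan : Submodule K (MvPolynomial PlueckerIdx K) :=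
  Submodule.span K (Set.range fun s : {s // IsStandard s} => (s.1.map X).prod)

theorem prod_X_mem_sup_standardSpan (s : Multiset PlueckerIdx) :
    (s.map X).prod ∈ (plueckerIdeal K).restrictScalars K ⊔ standardSpan K := by
  induction hn : (s.map spread).sum using Nat.strong_induction_on generalizing s with
  | _ n ih =>
    by_cases hs : IsStandard s
    · exact Submodule.mem_sup_right (Submodule.subset_span ⟨⟨s, hs⟩, rfl⟩)
    obtain ⟨⟨⟨a, d⟩, had⟩, ⟨⟨b, c⟩, hbc⟩, t, rfl, hab, hcd⟩ :=
      exists_eq_cons_cons_of_not_isStandard hs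
    dsimp only at hab hbc hcd
    obtain ⟨m, hm⟩ := exists_pfaffian_eq (K := K) hab hbc hcd
    have hrel : ((⟨(a, d), had⟩ ::ₘ ⟨(b, c), hbc⟩ ::ₘ t).map X).prod =
        pfaffian K m * (t.map X).prod
          - ((⟨(a, b), hab⟩ ::ₘ ⟨(c, d), hcd⟩ ::ₘ t).map X).prod
          + ((⟨(a, c), hab.trans hbc⟩ ::ₘ ⟨(b, d), hbc.trans hcd⟩ ::ₘ t).map X).prod := by
      simp only [hm, xv, Multiset.map_cons, Multiset.prod_cons]
      ring
    have hspread := Nat.sq_sub_add_sq_sub_lt hab hbc hcd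
    rw [hrel]
    refine add_mem (sub_mem (Submodule.mem_sup_left ?_) (ih _ ?_ _ rfl)) (ih _ ?_ _ rfl)
    · exact Ideal.mul_mem_right _ _ (Ideal.subset_span ⟨m, rfl⟩)
    all_goals
      simp only [← hn, Multiset.map_cons, Multiset.sum_cons, spread]
      omega

theorem sup_standardSpan_eq_top : (plueckerIdeal K).restrictScalars K ⊔ standardSpan K = ⊤ := by
  rw [eq_top_iff]
  rintro f -
  suffices h : ∀ s : Multiset PlueckerIdx, f * (s.map X).prod ∈
      (plueckerIdeal K).restrictScalars K ⊔ standardSpan K by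
    simpa using h 0
  induction f using MvPolynomial.induction_on with
  | C a =>
    intro s
    rw [C_mul']
    exact Submodule.smul_mem _ a (prod_X_mem_sup_standardSpan s)
  | add f g hf hg => exact fun s => (add_mul f g _).symm ▸ add_mem (hf s) (hg s)
  | mul_X f p hf =>
    intro s
    simpa [mul_assoc] using hf (p ::ₘ s)

theorem linearIndependent_plueckerMap_standard :
    LinearIndependent K fun s : {s // IsStandard s} => plueckerMap K (s.1.map X).prod :=
  MonomialOrder.lex.linearIndependent_of_injective_degree (fun s => plueckerMap_prod_ne_zero s.1)
    fun s t h => Subtype.ext (s.2.eq_of_degree_eq t.2 h)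

theorem eq_zero_of_mem_standardSpan_of_plueckerMap_eq_zero {g : MvPolynomial PlueckerIdx K}
    (hg : g ∈ standardSpan K) (h : plueckerMap K g = 0) : g = 0 := by
  rw [standardSpan, ← Finsupp.range_linearCombination] at hg
  obtain ⟨c, rfl⟩ := hg
  rw [← AlgHom.toLinearMap_apply, Finsupp.apply_linearCombination] at h
  rw [linearIndependent_iff.mp linearIndependent_plueckerMap_standard c h, map_zero]

theorem ker_plueckerMap : RingHom.ker (plueckerMap K) = plueckerIdeal K := by
  have hI : plueckerIdeal K ≤ RingHom.ker (plueckerMap K) :=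
    Ideal.span_le.mpr fun _ ⟨m, hm⟩ => hm ▸ plueckerMap_pfaffian m
  refine le_antisymm (fun f hf => ?_) hI
  obtain ⟨i, hi, g, hg, rfl⟩ :=
    Submodule.mem_sup.mp (sup_standardSpan_eq_top (K := K) ▸ Submodule.mem_top (x := f))
  rw [RingHom.mem_ker, map_add, hI hi, zero_add] at hf
  rw [eq_zero_of_mem_standardSpan_of_plueckerMap_eq_zero hg hf, add_zero]
  exact hi

end PlueckerIdeal

theorem stmt4 :
    (plueckerIdeal k).IsPrime ∧
      IsDomain (MvPolynomial PlueckerIdx k ⧸ plueckerIdeal k) := by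
  have h : (plueckerIdeal k).IsPrime := ker_plueckerMap (K := k) ▸ RingHom.ker_isPrime _
  exact ⟨h, (Ideal.Quotient.isDomain_iff_prime _).mpr h⟩
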